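/- arXiv:2207.03394 — 2 statements merged into one kernel-verified Lean document; each statement's English description precedes it below -/
import Mathlib

section
/- Interval modules over ℕ are indecomposable: for any interval I ⊆ ℕ, the persistence module F_I over a field F cannot be written as a direct sum of two nonzero persistence submodules. -/
open scoped ENNReal NNReal Classical

noncomputable section
/-! ### Persistence modules over ℕ -/

/-- A persistence module over `ℕ` with coefficients in the field `F`: a functor from
`(ℕ, ≤)` to `F`-vector spaces. -/
structure PersMod (F : Type) [Field F] where
  Vs : ℕ → Type
  [acg : ∀ n, AddCommGroup (Vs n)]
  [mod : ∀ n, Module F (Vs n)]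
  map : ∀ {i j : ℕ}, i ≤ j → Vs i →ₗ[F] Vs j
  map_id : ∀ i, map (le_refl i) = LinearMap.id
  map_comp : ∀ {i j k : ℕ} (hij : i ≤ j) (hjk : j ≤ k),
    map (hij.trans hjk) = (map hjk).comp (map hij)

attribute [instance] PersMod.acg PersMod.mod

/-- An interval in `ℕ`: a nonempty order-convex subset. -/
def IsInterval (I : Set ℕ) : Prop :=
  I.Nonempty ∧ ∀ r s t : ℕ, r ≤ s → s ≤ t → r ∈ I → t ∈ I → s ∈ I

def intervalSubmod (F : Type) [Field F] (I : Set ℕ) (t : ℕ) : Submodule F F :=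
  if t ∈ I then ⊤ else ⊥

/-- The interval module `F_I`: one-dimensional over the interval `I`, zero elsewhere,
with identity structure maps inside `I` and zero maps otherwise. -/
def intervalMod (F : Type) [Field F] (I : Set ℕ) (hI : IsInterval I) : PersMod F where
  Vs t := ↥(intervalSubmod F I t)
  map {i j} _ :=
    if h : i ∈ I ∧ j ∈ I then
      Submodule.inclusion (by simp [intervalSubmod, h.1, h.2]) else 0
  map_id i := by
    by_cases hi : i ∈ I
    · simp only [dif_pos (And.intro hi hi)]
      rfl
    · have : Subsingleton ↥(intervalSubmod F I i) := by
        rw [intervalSubmod, if_neg hi]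
        infer_instance
      apply LinearMap.ext
      intro x
      exact Subsingleton.elim _ _
  map_comp {i j k} hij hjk := by
    by_cases hj : j ∈ I
    · by_cases hi : i ∈ I
      · by_cases hk : k ∈ I
        · simp only [dif_pos (And.intro hi hk), dif_pos (And.intro hi hj),
            dif_pos (And.intro hj hk)]
          rfl
        · simp only [dif_neg (fun h : i ∈ I ∧ k ∈ I => hk h.2),
            dif_neg (fun h : j ∈ I ∧ k ∈ I => hk h.2)]
          simp
      · simp only [dif_neg (fun h : i ∈ I ∧ k ∈ I => hi h.1),
          dif_neg (fun h : i ∈ I ∧ j ∈ I => hi h.1)]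
        simp
    · have hik : ¬ (i ∈ I ∧ k ∈ I) := fun h => hj (hI.2 i j k hij hjk h.1 h.2)
      simp only [dif_neg hik, dif_neg (fun h : j ∈ I ∧ k ∈ I => hj h.1)]
      simp
  
/-- A persistence submodule: a family of subspaces invariant under the structure maps. -/
structure PersSubmod (F : Type) [Field F] (M : PersMod F) where
  p : ∀ n, Submodule F (M.Vs n)
  maps : ∀ (i j : ℕ) (h : i ≤ j), ∀ x ∈ p i, M.map h x ∈ p j

/-- Isomorphism of persistence modules: a natural family of linear isomorphisms. -/
def PersIso (F : Type) [Field F] (M N : PersMod F) : Prop :=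
  ∃ e : ∀ n, M.Vs n ≃ₗ[F] N.Vs n,
    ∀ (i j : ℕ) (h : i ≤ j) (x : M.Vs i), e j (M.map h x) = N.map h (e i x)

/-- Finite direct sum of interval modules, with barcode `Is`. -/
def dirSum (F : Type) [Field F] {m : ℕ} (Is : Fin m → Set ℕ)
    (hIs : ∀ j, IsInterval (Is j)) : PersMod F where
  Vs n := ∀ j : Fin m, (intervalMod F (Is j) (hIs j)).Vs n
  map h := LinearMap.pi fun k => ((intervalMod F (Is k) (hIs k)).map h).comp (LinearMap.proj k)
  map_id i := by
    apply LinearMap.ext; intro x; funext k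
    simp [PersMod.map_id]
  map_comp hij hjk := by
    apply LinearMap.ext; intro x; funext k
    show ((intervalMod F (Is k) (hIs k)).map (hij.trans hjk)) (x k) =
      ((intervalMod F (Is k) (hIs k)).map hjk)
        (((intervalMod F (Is k) (hIs k)).map hij) (x k))
    rw [PersMod.map_comp _ hij hjk]
    rfl
lemma mem_of_ne_bot (F : Type) [Field F] (I : Set ℕ) (hI : IsInterval I)
    (A : PersSubmod F (intervalMod F I hI)) (n : ℕ) (h : A.p n ≠ ⊥) : n ∈ I := by
  by_contra hn
  apply h
  rw [Submodule.eq_bot_iff]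
  intro x hx
  have : Subsingleton ((intervalMod F I hI).Vs n) := by
    show Subsingleton ↥(intervalSubmod F I n)
    rw [intervalSubmod, if_neg hn]
    infer_instance
  exact Subsingleton.elim _ _

def vval (F : Type) [Field F] (I : Set ℕ) (hI : IsInterval I) (n : ℕ)
    (v : (intervalMod F I hI).Vs n) : F := v.val

lemma vval_eq_zero (F : Type) [Field F] (I : Set ℕ) (hI : IsInterval I) (n : ℕ)
    (v : (intervalMod F I hI).Vs n) (h : vval F I hI n v = 0) : v = 0 := Subtype.ext h

lemma vval_smul (F : Type) [Field F] (I : Set ℕ) (hI : IsInterval I) (n : ℕ)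
    (c : F) (v : (intervalMod F I hI).Vs n) :
    vval F I hI n (c • v) = c * vval F I hI n v := rfl

lemma key (F : Type) [Field F] (I : Set ℕ) (hI : IsInterval I)
    (A B : PersSubmod F (intervalMod F I hI)) (a b : ℕ) (hab : a ≤ b)
    (hA : A.p a ≠ ⊥) (hB : B.p b ≠ ⊥) (hc : ∀ n, IsCompl (A.p n) (B.p n)) : False := by
  have haI : a ∈ I := mem_of_ne_bot F I hI A a hA
  have hbI : b ∈ I := mem_of_ne_bot F I hI B b hB
  obtain ⟨x, hxA, hx0⟩ := Submodule.exists_mem_ne_zero_of_ne_bot hA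
  obtain ⟨y, hyB, hy0⟩ := Submodule.exists_mem_ne_zero_of_ne_bot hB
  have hmap : (intervalMod F I hI).map hab x ∈ A.p b := A.maps a b hab x hxA
  have hmape : (intervalMod F I hI).map hab x =
      Submodule.inclusion (by simp [intervalSubmod, haI, hbI]) x := by
    show (if h : a ∈ I ∧ b ∈ I then
      Submodule.inclusion (by simp [intervalSubmod, h.1, h.2]) else 0) x = _
    rw [dif_pos ⟨haI, hbI⟩]
  set z := (intervalMod F I hI).map hab x with hz
  have hz1 : vval F I hI b z = vval F I hI a x := by rw [hmape]; rfl
  have hz0 : vval F I hI b z ≠ 0 := by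
    rw [hz1]; intro h; exact hx0 (vval_eq_zero F I hI a x h)
  have hy0' : vval F I hI b y ≠ 0 := fun h => hy0 (vval_eq_zero F I hI b y h)
  have hzy : z = ((vval F I hI b z) / (vval F I hI b y)) • y := by
    apply Subtype.ext
    show vval F I hI b z = vval F I hI b (((vval F I hI b z) / (vval F I hI b y)) • y)
    rw [vval_smul]
    field_simp
  have hzB : z ∈ B.p b := hzy ▸ Submodule.smul_mem _ _ hyB
  have h0 := (hc b).disjoint.le_bot ⟨hmap, hzB⟩
  rw [Submodule.mem_bot] at h0
  exact hz0 (by rw [h0]; rfl)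

/-- Interval modules over `ℕ` are indecomposable: the interval module `F_I` cannot be
written as the internal direct sum of two nonzero persistence submodules. -/
theorem intervalMod_indecomposable (F : Type) [Field F] (I : Set ℕ) (hI : IsInterval I) :
    ¬ ∃ A B : PersSubmod F (intervalMod F I hI),
        (∃ n, A.p n ≠ ⊥) ∧ (∃ n, B.p n ≠ ⊥) ∧ ∀ n, IsCompl (A.p n) (B.p n) := by
  rintro ⟨A, B, ⟨a, ha⟩, ⟨b, hb⟩, hc⟩
  rcases le_total a b with h | h
  · exact key F I hI A B a b h ha hb hc
  · exact key F I hI B A b a h hb ha (fun n => (hc n).symm)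
end
end

section
/- The persistence barcode of a finite type persistence module over ℕ is unique: if M ≅ ⊕_{j=1}^m F_{I_j} ≅ ⊕_{k=1}^n F_{J_k} for intervals I_j, J_k ⊆ ℕ, then m = n and the multiset of intervals {I_j} equals the multiset {J_k}. -/
open scoped ENNReal NNReal Classical

noncomputable section
/-!
The rank invariant `rk M (b ≤ d) = rank (M b → M d)` is preserved by isomorphism, and for
`⊕ⱼ F_{Iⱼ}` it counts the indices `j` with `b, d ∈ Iⱼ`. These counts determine a finite multiset of
intervals: for an inclusion-maximal interval `I` among those of both barcodes there are `b ≤ d` in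
`I` such that an interval of either barcode contains `b` and `d` only if it contains `I`, hence only
if it equals `I`. So `I` occurs equally often in both barcodes, and it can be removed from both.
-/

theorem Multiset.eq_of_countP_eq_of_separating {α ι : Type*} [PartialOrder α]
    (p : ι → α → Prop) [∀ i, DecidablePred (p i)] {S T : Multiset α}
    (hsep : ∀ a ∈ S + T, ∃ i, ∀ b ∈ S + T, p i b ↔ a ≤ b)
    (hcount : ∀ i, S.countP (p i) = T.countP (p i)) : S = T := by
  classical
  obtain ⟨n, hn⟩ : ∃ n, card (S + T) = n := ⟨_, rfl⟩
  induction n using Nat.strong_induction_on generalizing S T with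
  | _ n ih =>
  rcases (S + T).empty_or_exists_mem with hST | ⟨a₀, ha₀⟩
  · rw [add_eq_zero] at hST
    rw [hST.1, hST.2]
  obtain ⟨a, ha⟩ := (S + T).toFinset.exists_maximal ⟨a₀, Multiset.mem_toFinset.2 ha₀⟩
  have hmemT : a ∈ S + T := Multiset.mem_toFinset.1 ha.1
  obtain ⟨i, hi⟩ := hsep a hmemT
  -- by maximality of `a`, the test `p i` picks out exactly the copies of `a`
  have hcount_a : ∀ U ≤ S + T, U.countP (p i) = U.count a := fun U hU =>
    Multiset.countP_congr rfl fun b hb => propext <| (hi b (Multiset.mem_of_le hU hb)).trans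
      ⟨fun hab => (ha.eq_of_ge (Multiset.mem_toFinset.2 (Multiset.mem_of_le hU hb)) hab).symm,
        fun hab => hab ▸ le_rfl⟩
  have hcount_eq : S.count a = T.count a := by
    rw [← hcount_a S (Multiset.le_add_right S T), ← hcount_a T (Multiset.le_add_left T S),
      hcount i]
  have hmem : a ∈ S ∧ a ∈ T := by
    rw [← Multiset.count_pos, ← Multiset.count_pos, hcount_eq, and_self]
    rw [Multiset.mem_add, ← Multiset.count_pos, ← Multiset.count_pos, hcount_eq, or_self] at hmemT
    exact hmemT
  obtain ⟨S', rfl⟩ := Multiset.exists_cons_of_mem hmem.1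
  obtain ⟨T', rfl⟩ := Multiset.exists_cons_of_mem hmem.2
  congr 1
  have hle : S' + T' ≤ a ::ₘ S' + a ::ₘ T' :=
    add_le_add (Multiset.le_cons_self S' a) (Multiset.le_cons_self T' a)
  refine ih _ ?_ (fun b hb => ?_) (fun j => ?_) rfl
  · simp only [← hn, Multiset.card_add, Multiset.card_cons]
    omega
  · obtain ⟨j, hj⟩ := hsep b (Multiset.mem_of_le hle hb)
    exact ⟨j, fun c hc => hj c (Multiset.mem_of_le hle hc)⟩
  · simpa only [Multiset.countP_cons, add_left_inj] using hcount j

theorem Set.Nonempty.exists_mem_mem_iff_subset {α : Type*} [LinearOrder α] {I : Set α}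
    (hI : I.Nonempty) {U : Set (Set α)} (hU : U.Finite) (hconv : ∀ K ∈ U, K.OrdConnected) :
    ∃ b ∈ I, ∃ d ∈ I, b ≤ d ∧ ∀ K ∈ U, (b ∈ K ∧ d ∈ K ↔ I ⊆ K) := by
  classical
  obtain ⟨c, hc⟩ := hI
  -- a point of `I \ K` for each `K ∈ U` not containing `I`
  have hwit : ∀ K, ∃ x ∈ I, I ⊆ K ∨ x ∉ K := fun K => by
    by_cases h : I ⊆ K
    · exact ⟨c, hc, Or.inl h⟩
    · obtain ⟨x, hxI, hxK⟩ := Set.not_subset.1 h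
      exact ⟨x, hxI, Or.inr hxK⟩
  choose x hxI hxK using hwit
  set W : Finset α := insert c (hU.toFinset.image x)
  have hW : W.Nonempty := Finset.insert_nonempty _ _
  have hWI : ∀ y ∈ W, y ∈ I := by
    simp only [W, Finset.mem_insert, Finset.mem_image]
    rintro y (rfl | ⟨K, -, rfl⟩)
    exacts [hc, hxI K]
  refine ⟨W.min' hW, hWI _ (W.min'_mem hW), W.max' hW, hWI _ (W.max'_mem hW),
    W.min'_le_max' hW, fun K hK => ⟨fun ⟨hb, hd⟩ => ?_, fun h => ⟨h (hWI _ (W.min'_mem hW)),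
      h (hWI _ (W.max'_mem hW))⟩⟩⟩
  have hxW : x K ∈ W :=
    Finset.mem_insert_of_mem (Finset.mem_image_of_mem x (hU.mem_toFinset.2 hK))
  refine (hxK K).resolve_right fun hx => hx ?_
  exact (hconv K hK).out hb hd ⟨W.min'_le _ hxW, W.le_max' _ hxW⟩

theorem Multiset.eq_of_countP_mem_mem_eq {α : Type*} [LinearOrder α] {S T : Multiset (Set α)}
    (hS : ∀ K ∈ S, K.Nonempty ∧ K.OrdConnected) (hT : ∀ K ∈ T, K.Nonempty ∧ K.OrdConnected)
    (hcount : ∀ b d, b ≤ d →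
      S.countP (fun K => b ∈ K ∧ d ∈ K) = T.countP (fun K => b ∈ K ∧ d ∈ K)) :
    S = T := by
  classical
  have hST : ∀ K ∈ S + T, K.Nonempty ∧ K.OrdConnected := fun K hK =>
    (Multiset.mem_add.1 hK).elim (hS K) (hT K)
  refine Multiset.eq_of_countP_eq_of_separating
    (fun (i : {x : α × α // x.1 ≤ x.2}) K => i.1.1 ∈ K ∧ i.1.2 ∈ K) (fun I hI => ?_)
    (fun i => hcount _ _ i.2)
  obtain ⟨b, hb, d, hd, hbd, h⟩ := (hST I hI).1.exists_mem_mem_iff_subset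
    (S + T).toFinset.finite_toSet fun K hK => (hST K (by simpa using hK)).2
  exact ⟨⟨(b, d), hbd⟩, fun K hK => h K (by simpa using hK)⟩

theorem Fintype.exists_equiv_of_map_univ_val_eq {α ι κ : Type*} [Fintype ι] [Fintype κ]
    {f : ι → α} {g : κ → α} (h : Finset.univ.val.map f = Finset.univ.val.map g) :
    ∃ e : ι ≃ κ, ∀ i, f i = g (e i) := by
  classical
  have hfiber : ∀ a, Fintype.card {i // f i = a} = Fintype.card {k // g k = a} := fun a => by
    have := congrArg (Multiset.count a) h
    rw [Multiset.count_map, Multiset.count_map] at this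
    rw [Fintype.card_subtype, Fintype.card_subtype]
    simp_rw [@eq_comm _ (f _), @eq_comm _ (g _)]
    exact this
  exact ⟨Equiv.ofFiberEquiv fun a => Fintype.equivOfCardEq (hfiber a),
    fun i => (Equiv.ofFiberEquiv_map _ i).symm⟩

theorem LinearMap.finrank_range_piMap {K ι : Type*} [Field K] [Fintype ι] {V W : ι → Type*}
    [∀ i, AddCommGroup (V i)] [∀ i, Module K (V i)] [∀ i, AddCommGroup (W i)]
    [∀ i, Module K (W i)] [∀ i, FiniteDimensional K (W i)] (f : ∀ i, V i →ₗ[K] W i) :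
    Module.finrank K (LinearMap.range (LinearMap.piMap f)) =
      ∑ i, Module.finrank K (LinearMap.range (f i)) := by
  have hfactor : LinearMap.piMap f = (LinearMap.piMap fun i => (LinearMap.range (f i)).subtype) ∘ₗ
      LinearMap.piMap fun i => (f i).rangeRestrict := rfl
  have hsurj : LinearMap.range (LinearMap.piMap fun i => (f i).rangeRestrict) = ⊤ :=
    LinearMap.range_eq_top.2 fun y =>
      ⟨fun i => (LinearMap.range_eq_top.1 (f i).range_rangeRestrict (y i)).choose,
        funext fun i => (LinearMap.range_eq_top.1 (f i).range_rangeRestrict (y i)).choose_spec⟩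
  have hinj : Function.Injective (LinearMap.piMap fun i => (LinearMap.range (f i)).subtype) :=
    fun y z hyz => funext fun i => Subtype.ext (congrFun hyz i)
  rw [hfactor, LinearMap.range_comp_of_range_eq_top _ hsurj, LinearMap.finrank_range_of_inj hinj,
    Module.finrank_pi_fintype]

section Persistence

variable {F : Type} [Field F]

def PersMod.rank (M : PersMod F) {b d : ℕ} (h : b ≤ d) : ℕ :=
  Module.finrank F (LinearMap.range (M.map h))

theorem PersIso.rank_eq {M N : PersMod F} (hiso : PersIso F M N) {b d : ℕ} (h : b ≤ d) :
    M.rank h = N.rank h := by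
  obtain ⟨e, he⟩ := hiso
  have hconj : N.map h = (e d).toLinearMap ∘ₗ M.map h ∘ₗ (e b).symm.toLinearMap :=
    LinearMap.ext fun x => by simp [he b d h]
  rw [PersMod.rank, PersMod.rank, hconj, LinearMap.range_comp, LinearEquiv.range_comp,
    LinearEquiv.finrank_map_eq]

instance (I : Set ℕ) (hI : IsInterval I) (t : ℕ) :
    FiniteDimensional F ((intervalMod F I hI).Vs t) :=
  inferInstanceAs (FiniteDimensional F (intervalSubmod F I t))

theorem intervalMod_rank (I : Set ℕ) (hI : IsInterval I) {b d : ℕ} (h : b ≤ d) :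
    (intervalMod F I hI).rank h = if b ∈ I ∧ d ∈ I then 1 else 0 := by
  have hmap : (intervalMod F I hI).map h = if hbd : b ∈ I ∧ d ∈ I then
      Submodule.inclusion (by simp [intervalSubmod, hbd.1, hbd.2]) else 0 := rfl
  rw [PersMod.rank, hmap]
  by_cases hbd : b ∈ I ∧ d ∈ I
  · rw [dif_pos hbd, if_pos hbd]
    refine (LinearMap.finrank_range_of_inj (Submodule.inclusion_injective _)).trans ?_
    rw [intervalSubmod, if_pos hbd.1, finrank_top, Module.finrank_self]
  · rw [dif_neg hbd, if_neg hbd]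
    exact Submodule.finrank_eq_zero.2 LinearMap.range_zero

theorem dirSum_rank {m : ℕ} (Is : Fin m → Set ℕ) (hIs : ∀ j, IsInterval (Is j)) {b d : ℕ}
    (h : b ≤ d) :
    (dirSum F Is hIs).rank h =
      (Finset.univ.val.map Is).countP (fun K => b ∈ K ∧ d ∈ K) := by
  change Module.finrank F
    (LinearMap.range (LinearMap.piMap fun j => (intervalMod F (Is j) (hIs j)).map h)) = _
  rw [LinearMap.finrank_range_piMap]
  change ∑ j, (intervalMod F (Is j) (hIs j)).rank h = _
  simp only [intervalMod_rank, Finset.sum_boole, Multiset.countP_map]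
  rfl

end Persistence

theorem IsInterval.ordConnected {I : Set ℕ} (hI : IsInterval I) : I.OrdConnected :=
  ⟨fun r hr t ht _ hs => hI.2 r _ t hs.1 hs.2 hr ht⟩

/-- Uniqueness of the persistence barcode: if two finite direct sums of interval modules
are isomorphic as persistence modules over `ℕ`, then the two multisets of intervals
coincide (there is a bijection matching the intervals). -/
theorem barcode_unique (F : Type) [Field F] {m n : ℕ}
    (Is : Fin m → Set ℕ) (Js : Fin n → Set ℕ)
    (hIs : ∀ j, IsInterval (Is j)) (hJs : ∀ k, IsInterval (Js k))
    (hiso : PersIso F (dirSum F Is hIs) (dirSum F Js hJs)) :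
    ∃ e : Fin m ≃ Fin n, ∀ j : Fin m, Is j = Js (e j) := by
  have hintervals : ∀ {k : ℕ} (Ks : Fin k → Set ℕ), (∀ j, IsInterval (Ks j)) →
      ∀ K ∈ Finset.univ.val.map Ks, K.Nonempty ∧ K.OrdConnected := by
    intro k Ks hKs K hK
    obtain ⟨j, -, rfl⟩ := Multiset.mem_map.1 hK
    exact ⟨(hKs j).1, (hKs j).ordConnected⟩
  refine Fintype.exists_equiv_of_map_univ_val_eq <|
    Multiset.eq_of_countP_mem_mem_eq (hintervals Is hIs) (hintervals Js hJs) fun b d h => ?_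
  rw [← dirSum_rank (F := F) Is hIs h, ← dirSum_rank (F := F) Js hJs h]
  exact hiso.rank_eq h
end
end
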